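/- Let C and D be monoidal categories and E a symmetric monoidal category. Let F₁, F₂ : C × D ⥤ E be functors, each equipped with natural morphisms (λᵢ¹, λᵢ²), i = 1, 2, satisfying the bimonoidal compatibility condition. Define the pointwise tensor product functor F := F₁ ⊗ F₂ by F(x,y) := F₁(x,y) ⊗ F₂(x,y), with structure morphisms λ¹_{x,x',y} := ĉ ≫ (λ₁¹_{x,x',y} ⊗ λ₂¹_{x,x',y}) : (F₁(x,y)⊗F₂(x,y)) ⊗ (F₁(x',y)⊗F₂(x',y)) → F₁(x⊗x',y) ⊗ F₂(x⊗x',y), and λ²_{x,y,y'} := ĉ ≫ (λ₁²_{x,y,y'} ⊗ λ₂²_{x,y,y'}), where ĉ denotes the middle-four interchange of the symmetric braiding. Then (F, λ¹, λ²) satisfies the bimonoidal compatibility condition. -/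

import Mathlib

/-!
The braided interchange `ĉ` is the lax monoidal structure `μ` of the tensor product functor
`E × E ⥤ E`. When `E` is symmetric this functor is lax braided, so `ĉ` is compatible with
itself: interchanging twice in one order equals interchanging twice in the other. Together
with naturality of `ĉ`, this rearranges the compatibility diagram for `F₁ ⊗ F₂` into the tensor
product of the compatibility diagrams for `F₁` and `F₂`.
-/

open CategoryTheory MonoidalCategory

section

variable {C D E : Type*} [Category C] [Category D] [Category E]
  [MonoidalCategory C] [MonoidalCategory D] [MonoidalCategory E] [BraidedCategory E]

/-- The braided middle-four interchange
`ĉ_{P,Q,R,S} : (P⊗Q)⊗(R⊗S) ⟶ (P⊗R)⊗(Q⊗S)`. -/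
def braidedInterchange (P Q R S : E) : (P ⊗ Q) ⊗ (R ⊗ S) ⟶ (P ⊗ R) ⊗ (Q ⊗ S) :=
  (α_ P Q (R ⊗ S)).hom ≫
    (P ◁ ((α_ Q R S).inv ≫ ((β_ Q R).hom ▷ S) ≫ (α_ R Q S).hom)) ≫
      (α_ P R (Q ⊗ S)).inv

/-- The bimonoidal compatibility condition for a bifunctor `F : C × D ⥤ E`
equipped with partial monoidal structure morphisms `λ¹, λ²`. -/
def BimonoidalCompat (F : C × D ⥤ E)
    (l1 : ∀ (x x' : C) (y : D), F.obj (x, y) ⊗ F.obj (x', y) ⟶ F.obj (x ⊗ x', y))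
    (l2 : ∀ (x : C) (y y' : D), F.obj (x, y) ⊗ F.obj (x, y') ⟶ F.obj (x, y ⊗ y')) :
    Prop :=
  ∀ (x x' : C) (y y' : D),
    braidedInterchange (F.obj (x, y)) (F.obj (x', y)) (F.obj (x, y')) (F.obj (x', y')) ≫
        (l2 x y y' ⊗ₘ l2 x' y y') ≫ l1 x x' (y ⊗ y') =
      (l1 x x' y ⊗ₘ l1 x x' y') ≫ l2 (x ⊗ x') y y'

end

theorem braidedInterchange_eq_tensorμ {E : Type*} [Category E] [MonoidalCategory E]
    [BraidedCategory E] (P Q R S : E) :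
    braidedInterchange P Q R S = tensorμ P Q R S := by
  simp only [braidedInterchange, tensorμ, MonoidalCategory.whiskerLeft_comp, Category.assoc]

namespace CategoryTheory.MonoidalCategory

section

variable {C₁ C₂ : Type*} [Category C₁] [Category C₂] [MonoidalCategory C₁] [MonoidalCategory C₂]
  [BraidedCategory C₁] [BraidedCategory C₂]

instance prodBraided : BraidedCategory (C₁ × C₂) where
  braiding X Y := (β_ X.1 Y.1).prod (β_ X.2 Y.2)
  braiding_naturality_left f Z :=
    Prod.ext (BraidedCategory.braiding_naturality_left f.1 Z.1)
      (BraidedCategory.braiding_naturality_left f.2 Z.2)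
  braiding_naturality_right X _ _ f :=
    Prod.ext (BraidedCategory.braiding_naturality_right X.1 f.1)
      (BraidedCategory.braiding_naturality_right X.2 f.2)
  hexagon_forward X Y Z :=
    Prod.ext (BraidedCategory.hexagon_forward X.1 Y.1 Z.1)
      (BraidedCategory.hexagon_forward X.2 Y.2 Z.2)
  hexagon_reverse X Y Z :=
    Prod.ext (BraidedCategory.hexagon_reverse X.1 Y.1 Z.1)
      (BraidedCategory.hexagon_reverse X.2 Y.2 Z.2)

end

section

variable {C : Type*} [Category C] [MonoidalCategory C] [BraidedCategory C]

theorem tensorHom_comp_tensorμ_comp_tensorHom {A₁ A₂ A₃ A₄ B₁ B₂ B₃ B₄ U U' W W' V Z : C}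
    (f : A₁ ⊗ A₂ ⟶ U) (f' : A₃ ⊗ A₄ ⟶ U') (g : U ⊗ U' ⟶ V)
    (k : B₁ ⊗ B₂ ⟶ W) (k' : B₃ ⊗ B₄ ⟶ W') (h : W ⊗ W' ⟶ Z) :
    ((tensorμ A₁ B₁ A₂ B₂ ≫ (f ⊗ₘ k)) ⊗ₘ (tensorμ A₃ B₃ A₄ B₄ ≫ (f' ⊗ₘ k'))) ≫
        tensorμ U W U' W' ≫ (g ⊗ₘ h) =
      (tensorμ A₁ B₁ A₂ B₂ ⊗ₘ tensorμ A₃ B₃ A₄ B₄) ≫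
        tensorμ (A₁ ⊗ A₂) (B₁ ⊗ B₂) (A₃ ⊗ A₄) (B₃ ⊗ B₄) ≫ (((f ⊗ₘ f') ≫ g) ⊗ₘ ((k ⊗ₘ k') ≫ h)) := by
  rw [← tensorHom_comp_tensorHom, Category.assoc, tensorμ_natural_assoc, tensorHom_comp_tensorHom]

end

variable {E : Type*} [Category E] [MonoidalCategory E] [SymmetricCategory E]

theorem tensorμ_comp_braiding_tensorHom_braiding (X₁ X₂ Y₁ Y₂ : E) :
    tensorμ X₁ X₂ Y₁ Y₂ ≫ ((β_ X₁ Y₁).hom ⊗ₘ (β_ X₂ Y₂).hom) =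
      (β_ (X₁ ⊗ X₂) (Y₁ ⊗ Y₂)).hom ≫ tensorμ Y₁ Y₂ X₁ X₂ := by
  symm
  calc (β_ (X₁ ⊗ X₂) (Y₁ ⊗ Y₂)).hom ≫ tensorμ Y₁ Y₂ X₁ X₂
      = 𝟙 _ ⊗≫ X₁ ◁ (β_ X₂ Y₁).hom ▷ Y₂ ⊗≫ (β_ X₁ Y₁).hom ▷ X₂ ▷ Y₂ ⊗≫
          Y₁ ◁ X₁ ◁ (β_ X₂ Y₂).hom ⊗≫ Y₁ ◁ ((β_ X₁ Y₂).hom ≫ (β_ Y₂ X₁).hom) ▷ X₂ ⊗≫ 𝟙 _ := by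
        simp only [tensorμ, BraidedCategory.braiding_tensor_left_hom,
          BraidedCategory.braiding_tensor_right_hom]
        monoidal
    _ = 𝟙 _ ⊗≫ X₁ ◁ (β_ X₂ Y₁).hom ▷ Y₂ ⊗≫
          (β_ X₁ Y₁).hom ▷ (X₂ ⊗ Y₂) ≫ (Y₁ ⊗ X₁) ◁ (β_ X₂ Y₂).hom := by
        rw [SymmetricCategory.symmetry]; monoidal
    _ = tensorμ X₁ X₂ Y₁ Y₂ ≫ ((β_ X₁ Y₁).hom ⊗ₘ (β_ X₂ Y₂).hom) := by
        rw [tensorHom_def]; simp only [tensorμ]; monoidal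

instance tensorLaxBraided : (tensor E).LaxBraided where
  braided X Y := tensorμ_comp_braiding_tensorHom_braiding X.1 X.2 Y.1 Y.2

theorem tensorμ_tensorμ (A₁ B₁ A₂ B₂ A₃ B₃ A₄ B₄ : E) :
    tensorμ (A₁ ⊗ B₁) (A₂ ⊗ B₂) (A₃ ⊗ B₃) (A₄ ⊗ B₄) ≫
      (tensorμ A₁ B₁ A₃ B₃ ⊗ₘ tensorμ A₂ B₂ A₄ B₄) ≫
        tensorμ (A₁ ⊗ A₃) (B₁ ⊗ B₃) (A₂ ⊗ A₄) (B₂ ⊗ B₄) =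
    (tensorμ A₁ B₁ A₂ B₂ ⊗ₘ tensorμ A₃ B₃ A₄ B₄) ≫
      tensorμ (A₁ ⊗ A₂) (B₁ ⊗ B₂) (A₃ ⊗ A₄) (B₃ ⊗ B₄) ≫
        (tensorμ A₁ A₂ A₃ A₄ ⊗ₘ tensorμ B₁ B₂ B₃ B₄) :=
  tensorμ_comp_μ_tensorHom_μ_comp_μ (tensor E) (A₁, B₁) (A₂, B₂) (A₃, B₃) (A₄, B₄)

theorem tensorμ_comp_tensorHom_comp_tensorμ_comp_tensorHom
    {A₁ A₂ A₃ A₄ B₁ B₂ B₃ B₄ U U' W W' V Z : E}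
    (f : A₁ ⊗ A₃ ⟶ U) (f' : A₂ ⊗ A₄ ⟶ U') (g : U ⊗ U' ⟶ V)
    (k : B₁ ⊗ B₃ ⟶ W) (k' : B₂ ⊗ B₄ ⟶ W') (h : W ⊗ W' ⟶ Z) :
    tensorμ (A₁ ⊗ B₁) (A₂ ⊗ B₂) (A₃ ⊗ B₃) (A₄ ⊗ B₄) ≫
        ((tensorμ A₁ B₁ A₃ B₃ ≫ (f ⊗ₘ k)) ⊗ₘ (tensorμ A₂ B₂ A₄ B₄ ≫ (f' ⊗ₘ k'))) ≫
          tensorμ U W U' W' ≫ (g ⊗ₘ h) =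
      (tensorμ A₁ B₁ A₂ B₂ ⊗ₘ tensorμ A₃ B₃ A₄ B₄) ≫
        tensorμ (A₁ ⊗ A₂) (B₁ ⊗ B₂) (A₃ ⊗ A₄) (B₃ ⊗ B₄) ≫
          ((tensorμ A₁ A₂ A₃ A₄ ≫ (f ⊗ₘ f') ≫ g) ⊗ₘ (tensorμ B₁ B₂ B₃ B₄ ≫ (k ⊗ₘ k') ≫ h)) := by
  rw [tensorHom_comp_tensorμ_comp_tensorHom, reassoc_of% tensorμ_tensorμ, tensorHom_comp_tensorHom]

end CategoryTheory.MonoidalCategory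

theorem bimonoidalCompat_pointwise_tensor_general
    {C D E : Type*} [Category C] [Category D] [Category E]
    [MonoidalCategory C] [MonoidalCategory D] [MonoidalCategory E]
    [SymmetricCategory E]
    (F₁ F₂ : C × D ⥤ E)
    (l11 : ∀ (x x' : C) (y : D), F₁.obj (x, y) ⊗ F₁.obj (x', y) ⟶ F₁.obj (x ⊗ x', y))
    (l12 : ∀ (x : C) (y y' : D), F₁.obj (x, y) ⊗ F₁.obj (x, y') ⟶ F₁.obj (x, y ⊗ y'))
    (l21 : ∀ (x x' : C) (y : D), F₂.obj (x, y) ⊗ F₂.obj (x', y) ⟶ F₂.obj (x ⊗ x', y))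
    (l22 : ∀ (x : C) (y y' : D), F₂.obj (x, y) ⊗ F₂.obj (x, y') ⟶ F₂.obj (x, y ⊗ y'))
    (h1 : BimonoidalCompat F₁ l11 l12)
    (h2 : BimonoidalCompat F₂ l21 l22) :
    BimonoidalCompat (F₁ ⊗ F₂)
      (fun x x' y =>
        braidedInterchange (F₁.obj (x, y)) (F₂.obj (x, y)) (F₁.obj (x', y)) (F₂.obj (x', y)) ≫
          (l11 x x' y ⊗ₘ l21 x x' y))
      (fun x y y' =>
        braidedInterchange (F₁.obj (x, y)) (F₂.obj (x, y)) (F₁.obj (x, y')) (F₂.obj (x, y')) ≫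
          (l12 x y y' ⊗ₘ l22 x y y')) := by
  intro x x' y y'
  simp only [BimonoidalCompat, braidedInterchange_eq_tensorμ, Monoidal.tensorObj_obj] at h1 h2 ⊢
  rw [tensorμ_comp_tensorHom_comp_tensorμ_comp_tensorHom, tensorHom_comp_tensorμ_comp_tensorHom,
    h1, h2]

theorem bimonoidalCompat_pointwise_tensor
    {C D E : Type*} [Category C] [Category D] [Category E]
    [MonoidalCategory C] [MonoidalCategory D] [MonoidalCategory E]
    [SymmetricCategory E]
    (F₁ F₂ : C × D ⥤ E)
    (l11 : ∀ (x x' : C) (y : D), F₁.obj (x, y) ⊗ F₁.obj (x', y) ⟶ F₁.obj (x ⊗ x', y))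
    (l12 : ∀ (x : C) (y y' : D), F₁.obj (x, y) ⊗ F₁.obj (x, y') ⟶ F₁.obj (x, y ⊗ y'))
    (l21 : ∀ (x x' : C) (y : D), F₂.obj (x, y) ⊗ F₂.obj (x', y) ⟶ F₂.obj (x ⊗ x', y))
    (l22 : ∀ (x : C) (y y' : D), F₂.obj (x, y) ⊗ F₂.obj (x, y') ⟶ F₂.obj (x, y ⊗ y'))
    -- naturality of the structure morphisms of `F₁`
    (hl11nat : ∀ {x x₁ x' x₁' : C} {y y₁ : D} (f : x ⟶ x₁) (f' : x' ⟶ x₁') (g : y ⟶ y₁),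
      (F₁.map ((f, g) : (x, y) ⟶ (x₁, y₁)) ⊗ₘ F₁.map ((f', g) : (x', y) ⟶ (x₁', y₁))) ≫
          l11 x₁ x₁' y₁ =
        l11 x x' y ≫ F₁.map ((f ⊗ₘ f', g) : (x ⊗ x', y) ⟶ (x₁ ⊗ x₁', y₁)))
    (hl12nat : ∀ {x x₁ : C} {y y₁ y' y₁' : D} (f : x ⟶ x₁) (g : y ⟶ y₁) (g' : y' ⟶ y₁'),
      (F₁.map ((f, g) : (x, y) ⟶ (x₁, y₁)) ⊗ₘ F₁.map ((f, g') : (x, y') ⟶ (x₁, y₁'))) ≫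
          l12 x₁ y₁ y₁' =
        l12 x y y' ≫ F₁.map ((f, g ⊗ₘ g') : (x, y ⊗ y') ⟶ (x₁, y₁ ⊗ y₁')))
    -- naturality of the structure morphisms of `F₂`
    (hl21nat : ∀ {x x₁ x' x₁' : C} {y y₁ : D} (f : x ⟶ x₁) (f' : x' ⟶ x₁') (g : y ⟶ y₁),
      (F₂.map ((f, g) : (x, y) ⟶ (x₁, y₁)) ⊗ₘ F₂.map ((f', g) : (x', y) ⟶ (x₁', y₁))) ≫
          l21 x₁ x₁' y₁ =
        l21 x x' y ≫ F₂.map ((f ⊗ₘ f', g) : (x ⊗ x', y) ⟶ (x₁ ⊗ x₁', y₁)))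
    (hl22nat : ∀ {x x₁ : C} {y y₁ y' y₁' : D} (f : x ⟶ x₁) (g : y ⟶ y₁) (g' : y' ⟶ y₁'),
      (F₂.map ((f, g) : (x, y) ⟶ (x₁, y₁)) ⊗ₘ F₂.map ((f, g') : (x, y') ⟶ (x₁, y₁'))) ≫
          l22 x₁ y₁ y₁' =
        l22 x y y' ≫ F₂.map ((f, g ⊗ₘ g') : (x, y ⊗ y') ⟶ (x₁, y₁ ⊗ y₁')))
    (h1 : BimonoidalCompat F₁ l11 l12)
    (h2 : BimonoidalCompat F₂ l21 l22) :
    BimonoidalCompat (F₁ ⊗ F₂)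
      (fun x x' y =>
        braidedInterchange (F₁.obj (x, y)) (F₂.obj (x, y)) (F₁.obj (x', y)) (F₂.obj (x', y)) ≫
          (l11 x x' y ⊗ₘ l21 x x' y))
      (fun x y y' =>
        braidedInterchange (F₁.obj (x, y)) (F₂.obj (x, y)) (F₁.obj (x, y')) (F₂.obj (x, y')) ≫
          (l12 x y y' ⊗ₘ l22 x y y')) :=
  bimonoidalCompat_pointwise_tensor_general F₁ F₂ l11 l12 l21 l22 h1 h2
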